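/- Let E ⊆ ℝ, Y a Banach space, φ : E → ℝ a function, and f : ℝ → Y a Lipschitz function. Suppose E is not porous at t₀ ∈ E, both φ and f∘φ are differentiable at t₀ (as functions on E), and φ'(t₀) ≠ 0. Then f is differentiable at φ(t₀). -/

import Mathlib

open Filter Set
open scoped Topology NNReal

/-!
Replace `φ` by its affine model `ψ t = φ t₀ + L (t - t₀)`. Since `f` is Lipschitz and
`ψ - φ = o(t - t₀)` on `E`, the function `f ∘ ψ` still has derivative `D` at `t₀` within `E`.
A Lipschitz function that is differentiable within a set `S` at `x₀` is differentiable at `x₀`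
as soon as every point `x` near `x₀` lies within `o(|x - x₀|)` of `S`: compare `x` with a nearby
point of `S`. Non-porosity of `E` at `t₀` is exactly this condition, so `f ∘ ψ` is
differentiable at `t₀`, and `f = (f ∘ ψ) ∘ ψ⁻¹` is differentiable at `φ t₀` because `L ≠ 0`.
-/

/-- `E ⊆ ℝ` is porous at `t`: there are `ε > 0` and `x i → t` with
`E ∩ B(x i, ε · |t − x i|) = ∅` for all `i`. -/
def PorousAt (E : Set ℝ) (t : ℝ) : Prop :=
  ∃ ε : ℝ, 0 < ε ∧ ∃ x : ℕ → ℝ, Tendsto x atTop (𝓝 t) ∧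
    ∀ i, E ∩ Metric.closedBall (x i) (ε * |t - x i|) = ∅

open Asymptotics

def AsymptoticallyDenseAt {X : Type*} [PseudoMetricSpace X] (S : Set X) (x₀ : X) : Prop :=
  ∀ ε > 0, ∀ᶠ x in 𝓝 x₀, ∃ s ∈ S, dist x s ≤ ε * dist x x₀

theorem asymptoticallyDenseAt_of_not_porousAt {E : Set ℝ} {t : ℝ} (h : ¬ PorousAt E t) :
    AsymptoticallyDenseAt E t := by
  intro ε hε
  by_contra hfreq
  obtain ⟨x, hx, hfar⟩ := frequently_iff_seq_forall.1 (not_eventually.1 hfreq)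
  refine h ⟨ε, hε, x, hx, fun i => eq_empty_of_forall_notMem fun s ⟨hsE, hs⟩ => hfar i ⟨s, hsE, ?_⟩⟩
  rwa [Metric.mem_closedBall, dist_comm, ← Real.dist_eq, dist_comm t] at hs

namespace AsymptoticallyDenseAt

section PseudoMetric

variable {X : Type*} [PseudoMetricSpace X] {S : Set X} {x₀ : X}

theorem eventually_exists_mem (hS : AsymptoticallyDenseAt S x₀) {p : X → Prop}
    (hp : ∀ᶠ s in 𝓝[S] x₀, p s) {ε : ℝ} (hε : 0 < ε) :
    ∀ᶠ x in 𝓝 x₀, ∃ s ∈ S, dist x s ≤ ε * dist x x₀ ∧ p s := by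
  obtain ⟨δ, hδ, hp⟩ := Metric.eventually_nhds_iff.1 (eventually_nhdsWithin_iff.1 hp)
  filter_upwards [hS (min ε 1) (lt_min hε one_pos), Metric.ball_mem_nhds x₀ (half_pos hδ)]
    with x ⟨s, hsS, hs⟩ hx
  have hε₁ : min ε 1 ≤ 1 := min_le_right _ _
  refine ⟨s, hsS, hs.trans (by gcongr; exact min_le_left _ _), hp ?_ hsS⟩
  rw [Metric.mem_ball] at hx
  calc dist s x₀ ≤ dist x s + dist x x₀ := dist_triangle_left _ _ _
    _ ≤ 2 * dist x x₀ := by nlinarith [dist_nonneg (x := x) (y := x₀)]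
    _ < δ := by linarith

end PseudoMetric

section Normed

variable {X Y : Type*} [SeminormedAddCommGroup X] [SeminormedAddCommGroup Y] {S : Set X} {x₀ : X}

theorem isLittleO_of_isLittleO_nhdsWithin (hS : AsymptoticallyDenseAt S x₀) {g : X → Y}
    {K : ℝ≥0} (hg : LipschitzWith K g) (h : g =o[𝓝[S] x₀] (fun x => x - x₀)) :
    g =o[𝓝 x₀] (fun x => x - x₀) := by
  refine isLittleO_iff.2 fun c hc => ?_
  set ε := c / (2 * (K + 1)) with hε_def
  have hε : 0 < ε := by positivity
  have hKε : K * ε ≤ c / 2 := by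
    rw [hε_def, mul_div_assoc', div_le_div_iff₀ (by positivity) two_pos]; nlinarith
  set c₁ := c / (2 * (1 + ε)) with hc₁_def
  have hc₁ : c₁ * (1 + ε) = c / 2 := by rw [hc₁_def]; field_simp
  filter_upwards [hS.eventually_exists_mem (isLittleO_iff.1 h (by positivity : 0 < c₁)) hε]
    with z ⟨s, _, hzs, hs⟩
  rw [dist_eq_norm, dist_eq_norm] at hzs
  have hsx₀ : ‖s - x₀‖ ≤ (1 + ε) * ‖z - x₀‖ := by
    calc ‖s - x₀‖ ≤ ‖z - s‖ + ‖z - x₀‖ := by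
          rw [norm_sub_rev z]; exact norm_sub_le_norm_sub_add_norm_sub s z x₀
      _ ≤ (1 + ε) * ‖z - x₀‖ := by linarith
  calc ‖g z‖ ≤ ‖g s‖ + ‖g z - g s‖ := norm_le_norm_add_norm_sub' _ _
    _ ≤ c₁ * ‖s - x₀‖ + K * ‖z - s‖ := by
        gcongr; simpa [dist_eq_norm] using hg.dist_le_mul z s
    _ ≤ c₁ * ((1 + ε) * ‖z - x₀‖) + K * (ε * ‖z - x₀‖) := by gcongr
    _ ≤ c * ‖z - x₀‖ := by nlinarith [norm_nonneg (z - x₀)]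

end Normed

theorem hasFDerivAt_of_hasFDerivWithinAt {𝕜 X Y : Type*} [NontriviallyNormedField 𝕜]
    [NormedAddCommGroup X] [NormedSpace 𝕜 X] [NormedAddCommGroup Y] [NormedSpace 𝕜 Y]
    {S : Set X} {x₀ : X} (hS : AsymptoticallyDenseAt S x₀) {f : X → Y} {f' : X →L[𝕜] Y}
    {K : ℝ≥0} (hf : LipschitzWith K f) (h : HasFDerivWithinAt f f' S x₀) :
    HasFDerivAt f f' x₀ := by
  have hlip : LipschitzWith (K + ‖f'‖₊) fun x => f x - f x₀ - f' (x - x₀) :=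
    LipschitzWith.of_dist_le_mul fun x y => by
      rw [dist_eq_norm, dist_eq_norm, show f x - f x₀ - f' (x - x₀) - (f y - f x₀ - f' (y - x₀))
        = (f x - f y) - f' (x - y) by rw [map_sub, map_sub, map_sub]; abel]
      push_cast
      calc ‖f x - f y - f' (x - y)‖ ≤ ‖f x - f y‖ + ‖f' (x - y)‖ := norm_sub_le _ _
        _ ≤ K * ‖x - y‖ + ‖f'‖ * ‖x - y‖ := by
          gcongr
          · simpa [dist_eq_norm] using hf.dist_le_mul x y
          · exact f'.le_opNorm _
        _ = (K + ‖f'‖) * ‖x - y‖ := by ring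
  exact .of_isLittleO (hS.isLittleO_of_isLittleO_nhdsWithin hlip h.isLittleO)

end AsymptoticallyDenseAt

theorem LipschitzWith.hasDerivWithinAt_comp_of_isLittleO {𝕜 X Y : Type*}
    [NontriviallyNormedField 𝕜] [SeminormedAddCommGroup X] [NormedAddCommGroup Y]
    [NormedSpace 𝕜 Y] {f : X → Y} {K : ℝ≥0} (hf : LipschitzWith K f) {φ ψ : 𝕜 → X} {D : Y}
    {s : Set 𝕜} {t₀ : 𝕜} (hφ : HasDerivWithinAt (f ∘ φ) D s t₀)
    (hψφ : (fun t => ψ t - φ t) =o[𝓝[s] t₀] (fun t => t - t₀)) (ht₀ : ψ t₀ = φ t₀) :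
    HasDerivWithinAt (f ∘ ψ) D s t₀ := by
  have hbound : (fun t => f (ψ t) - f (φ t)) =O[𝓝[s] t₀] (fun t => ψ t - φ t) :=
    .of_bound K (.of_forall fun t => by simpa [dist_eq_norm] using hf.dist_le_mul (ψ t) (φ t))
  refine .of_isLittleO ((hφ.isLittleO.add (hbound.trans_isLittleO hψφ)).congr_left fun t => ?_)
  simp only [Function.comp_apply, ht₀]
  abel

theorem stmt9_general {Y : Type*} [NormedAddCommGroup Y] [NormedSpace ℝ Y]
    (E : Set ℝ) (t₀ : ℝ) (hnp : ¬ PorousAt E t₀)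
    (φ : ℝ → ℝ) (f : ℝ → Y) (K : ℝ≥0) (hf : LipschitzWith K f)
    (L : ℝ) (hφ : HasDerivWithinAt φ L E t₀) (hL : L ≠ 0)
    (D : Y) (hfφ : HasDerivWithinAt (f ∘ φ) D E t₀) :
    DifferentiableAt ℝ f (φ t₀) := by
  set ψ : ℝ → ℝ := fun t => φ t₀ + L * (t - t₀)
  have hψφ : (fun t => ψ t - φ t) =o[𝓝[E] t₀] (fun t => t - t₀) :=
    hφ.isLittleO.neg_left.congr_left fun t => by simp only [ψ, smul_eq_mul]; ring
  have hψ : LipschitzWith ‖L‖₊ ψ := LipschitzWith.of_dist_le_mul fun x y => by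
    rw [Real.dist_eq, Real.dist_eq, add_sub_add_left_eq_sub, ← mul_sub, sub_sub_sub_cancel_right,
      abs_mul]
    rfl
  have hfψ : HasDerivAt (f ∘ ψ) D t₀ :=
    (asymptoticallyDenseAt_of_not_porousAt hnp).hasFDerivAt_of_hasFDerivWithinAt (hf.comp hψ)
      (hf.hasDerivWithinAt_comp_of_isLittleO hfφ hψφ (by simp [ψ]))
  have hf_eq : f = (f ∘ ψ) ∘ fun z => t₀ + (z - φ t₀) / L := by
    funext z; simp only [Function.comp_apply, ψ]; congr 1; field_simp; ring
  rw [hf_eq]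
  exact DifferentiableAt.comp _ (by simpa using hfψ.differentiableAt) (by fun_prop)

/-- Let `E ⊆ ℝ`, `Y` a Banach space, `f : ℝ → Y` Lipschitz. If `E` is not
porous at `t₀ ∈ E`, both `φ` and `f ∘ φ` are differentiable at `t₀` within `E`, and
`φ'(t₀) ≠ 0`, then `f` is differentiable at `φ t₀`. -/
theorem stmt9 {Y : Type*} [NormedAddCommGroup Y] [NormedSpace ℝ Y] [CompleteSpace Y]
    (E : Set ℝ) (t₀ : ℝ) (ht₀ : t₀ ∈ E) (hnp : ¬ PorousAt E t₀)
    (φ : ℝ → ℝ) (f : ℝ → Y) (K : ℝ≥0) (hf : LipschitzWith K f)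
    (L : ℝ) (hφ : HasDerivWithinAt φ L E t₀) (hL : L ≠ 0)
    (D : Y) (hfφ : HasDerivWithinAt (f ∘ φ) D E t₀) :
    DifferentiableAt ℝ f (φ t₀) :=
  stmt9_general E t₀ hnp φ f K hf L hφ hL D hfφ
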